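/- For every positive integer k, there exists a root vertex r of the odd cycle C_{2k+1} and a configuration with 2·⌊2^{k+1}/3⌋ pebbles that is r-unsolvable; specifically, placing ⌊2^{k+1}/3⌋ pebbles on each of the two vertices at distance k from r is r-unsolvable. -/

import Mathlib

open SimpleGraph Finset

def PebMove {V : Type*} [DecidableEq V] (G : SimpleGraph V) (p q : V → ℕ) : Prop :=
  ∃ u v, G.Adj u v ∧ 2 ≤ p u ∧
    q = fun x => if x = u then p u - 2 else if x = v then p v + 1 else p x

def Solvable {V : Type*} [DecidableEq V] (G : SimpleGraph V) (r : V) (p : V → ℕ) : Prop :=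
  ∃ q, Relation.ReflTransGen (PebMove G) p q ∧ 1 ≤ q r

noncomputable def confWeight {V : Type*} [Fintype V] (w : V → ℝ) (p : V → ℕ) : ℝ :=
  ∑ v, (p v : ℝ) * w v

def ValidWeight {V : Type*} [Fintype V] [DecidableEq V] (G : SimpleGraph V) (r : V)
    (w : V → ℝ) : Prop :=
  w r = 0 ∧ (∀ v, v ≠ r → 0 < w v) ∧
    ∀ p : V → ℕ, ¬ Solvable G r p → confWeight w p ≤ confWeight w (fun _ => 1)

noncomputable def rootedPebblingNumber {V : Type*} [Fintype V] [DecidableEq V]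
    (G : SimpleGraph V) (r : V) : ℕ :=
  sInf {N | ∀ p : V → ℕ, N ≤ ∑ v, p v → Solvable G r p}

noncomputable def pebblingNumber {V : Type*} [Fintype V] [DecidableEq V]
    (G : SimpleGraph V) : ℕ :=
  sInf {N | ∀ (r : V) (p : V → ℕ), N ≤ ∑ v, p v → Solvable G r p}

def cubeGraph (n : ℕ) : SimpleGraph (Fin n → Bool) :=
  SimpleGraph.fromRel (fun x y => hammingDist x y = 1)

def addPendant {V : Type*} (G : SimpleGraph V) (a : V) : SimpleGraph (Option V) :=
  SimpleGraph.fromRel (fun x y =>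
    match x, y with
    | some u, some v => G.Adj u v
    | none, some u => u = a
    | _, _ => False)

def lollipop (n m : ℕ) : SimpleGraph (Fin (n + 1) ⊕ Fin (m + 1)) :=
  SimpleGraph.fromRel (fun x y =>
    match x, y with
    | Sum.inl i, Sum.inl j => (i : ℕ) + 1 = (j : ℕ)
    | Sum.inl i, Sum.inr j => i = 0 ∧ j ≠ 0
    | Sum.inr i, Sum.inr j => i = 0 ∧ j ≠ 0
    | _, _ => False)

/-!
Root the cycle at `0` and put `c = ⌊2^(k+1)/3⌋` pebbles on `k` and `k + 1`. Deleting the root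
leaves the path `1 — 2 — ⋯ — 2k`, and for `a = k` and `a = k + 1` the weight `2 ^ |v - a|` grows
by a factor at most `2` along each of its edges, so a pebbling move avoiding the root never
increases the weighted pebble count, which starts at `3c < 2^(k+1)`. A first move into the root
needs two pebbles on `1` or on `2k`, whose weights for `a = k + 1`, resp. `a = k`, are `2^k`;
that would already make the weighted count at least `2^(k+1)`.
-/

namespace SimpleGraph

variable {V : Type*} {G : SimpleGraph V}

theorem Walk.apply_le_apply_add_length {f : V → ℕ} (hf : ∀ a b, G.Adj a b → f b ≤ f a + 1)
    {u v : V} (p : G.Walk u v) : f v ≤ f u + p.length := by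
  induction p with
  | nil => simp
  | cons h p ih => grind [Walk.length_cons]

theorem Reachable.apply_le_apply_add_dist {f : V → ℕ} (hf : ∀ a b, G.Adj a b → f b ≤ f a + 1)
    {u v : V} (h : G.Reachable u v) : f v ≤ f u + G.dist u v := by
  obtain ⟨p, hp⟩ := h.exists_walk_length_eq_dist
  exact hp ▸ p.apply_le_apply_add_length hf

theorem dist_le_of_exists_adj_lt {f : V → ℕ} {r : V}
    (hf : ∀ v, v ≠ r → ∃ u, G.Adj u v ∧ f u < f v) (v : V) : G.dist r v ≤ f v := by
  induction hv : f v using Nat.strong_induction_on generalizing v with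
  | _ m ih =>
    by_cases hvr : v = r
    · simp [hvr]
    obtain ⟨u, huv, hlt⟩ := hf v hvr
    calc G.dist r v ≤ G.dist r u + G.dist u v := huv.reachable.dist_triangle_right r
      _ ≤ f u + 1 := by grw [ih (f u) (hv ▸ hlt) u rfl, dist_eq_one_iff_adj.mpr huv]
      _ ≤ m := by omega

theorem cycleGraph_val_of_adj {n : ℕ} {u v : Fin n} (h : (cycleGraph n).Adj u v) :
    u.val + 1 = v.val ∨ v.val + 1 = u.val ∨ (u.val = 0 ∧ v.val + 1 = n) ∨
      (v.val = 0 ∧ u.val + 1 = n) := by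
  rw [cycleGraph_adj'] at h
  rcases le_or_gt v u with huv | huv <;> rcases le_or_gt u v with hvu | hvu <;>
    simp only [Fin.coe_sub_iff_le.mpr, Fin.coe_sub_iff_lt.mpr, *] at h <;> omega

theorem cycleGraph_val_of_adj_zero {n : ℕ} [NeZero n] {u : Fin n}
    (h : (cycleGraph n).Adj u 0) : u.val = 1 ∨ u.val + 1 = n := by
  have := cycleGraph_val_of_adj h
  simp only [Fin.val_zero] at this
  omega

theorem cycleGraph_adj_of_val_add_one_eq {n : ℕ} {u v : Fin n} (h : u.val + 1 = v.val) :
    (cycleGraph n).Adj u v := by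
  rw [cycleGraph_adj', Fin.coe_sub_iff_le (a := v) (b := u) |>.mpr (Fin.le_def.mpr (by omega))]
  omega

theorem cycleGraph_adj_zero_of_val_add_one_eq {n : ℕ} [NeZero n] {v : Fin n} (hv : v ≠ 0)
    (h : v.val + 1 = n) : (cycleGraph n).Adj v 0 := by
  rw [cycleGraph_adj', Fin.coe_sub_iff_lt (a := 0) (b := v) |>.mpr (Fin.pos_iff_ne_zero.mpr hv)]
  simp only [Fin.val_zero]
  omega

theorem cycleGraph_dist_zero {n : ℕ} [NeZero n] (v : Fin n) :
    (cycleGraph n).dist 0 v = min v.val (n - v.val) := by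
  set f : Fin n → ℕ := fun v => min v.val (n - v.val)
  apply le_antisymm
  · refine dist_le_of_exists_adj_lt (f := f) (fun v hv => ?_) v
    have hv0 : 0 < v.val := Fin.pos_iff_ne_zero.mpr hv
    by_cases hle : v.val ≤ n - v.val
    · exact ⟨⟨v.val - 1, by omega⟩, cycleGraph_adj_of_val_add_one_eq (Nat.sub_add_cancel hv0),
        by simp only [f]; omega⟩
    by_cases hlast : v.val + 1 = n
    · exact ⟨0, (cycleGraph_adj_zero_of_val_add_one_eq hv hlast).symm,
        by simp only [f, Fin.val_zero]; omega⟩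
    · exact ⟨⟨v.val + 1, by omega⟩, (cycleGraph_adj_of_val_add_one_eq rfl).symm,
        by simp only [f]; omega⟩
  · have hf : ∀ a b, (cycleGraph n).Adj a b → f b ≤ f a + 1 := fun a b hab => by
      have := cycleGraph_val_of_adj hab
      simp only [f]
      omega
    simpa [f] using (cycleGraph_preconnected 0 v).apply_le_apply_add_dist hf

theorem cycleGraph_dist_zero_eq_iff {k : ℕ} (hk : 1 ≤ k) (v : Fin (2 * k + 1)) :
    (cycleGraph (2 * k + 1)).dist 0 v = k ↔
      v ∈ ({⟨k, by omega⟩, ⟨k + 1, by omega⟩} : Finset (Fin (2 * k + 1))) := by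
  simp only [cycleGraph_dist_zero, Finset.mem_insert, Finset.mem_singleton, Fin.ext_iff]
  omega

end SimpleGraph

section Pebbling

variable {V : Type*} [Fintype V]

theorem confWeight_ite_mem [DecidableEq V] (w : V → ℝ) (s : Finset V) (c : ℕ) :
    confWeight w (fun v => if v ∈ s then c else 0) = c * ∑ v ∈ s, w v := by
  simp [confWeight, Finset.mul_sum]

theorem mul_le_confWeight {w : V → ℝ} (hw : ∀ v, 0 ≤ w v) (p : V → ℕ) (v : V) :
    p v * w v ≤ confWeight w p :=
  Finset.single_le_sum (f := fun v => (p v : ℝ) * w v) (fun u _ => by have := hw u; positivity)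
    (Finset.mem_univ v)

theorem confWeight_move [DecidableEq V] (w : V → ℝ) {p : V → ℕ} {u v : V} (huv : u ≠ v)
    (hu : 2 ≤ p u) :
    confWeight w (fun x => if x = u then p u - 2 else if x = v then p v + 1 else p x) =
      confWeight w p - 2 * w u + w v := by
  have hterm : ∀ x, ((if x = u then p u - 2 else if x = v then p v + 1 else p x : ℕ) : ℝ) * w x
      = p x * w x - (if x = u then 2 * w u else 0) + (if x = v then w v else 0) := by
    intro x
    rcases eq_or_ne x u with rfl | hxu
    · simp only [↓reduceIte, huv, Nat.cast_sub hu]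
      ring
    rcases eq_or_ne x v with rfl | hxv
    · simp only [hxu, ↓reduceIte, Nat.cast_add, Nat.cast_one]
      ring
    · simp [hxu, hxv]
  simp only [confWeight, hterm, Finset.sum_add_distrib, Finset.sum_sub_distrib,
    Finset.sum_ite_eq', Finset.mem_univ, if_true]

theorem not_solvable_of_confWeight_le [DecidableEq V] {ι : Type*} {G : SimpleGraph V} {r : V}
    (w : ι → V → ℝ) (B : ℝ) (hw_nonneg : ∀ i v, 0 ≤ w i v)
    (hw_adj : ∀ i u v, G.Adj u v → u ≠ r → v ≠ r → w i v ≤ 2 * w i u)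
    (hw_root : ∀ u, G.Adj u r → ∃ i, B < 2 * w i u)
    {p : V → ℕ} (hpr : p r = 0) (hpB : ∀ i, confWeight (w i) p ≤ B) : ¬ Solvable G r p := by
  have invariant : ∀ q, Relation.ReflTransGen (PebMove G) p q →
      q r = 0 ∧ ∀ i, confWeight (w i) q ≤ B := by
    intro q hpq
    induction hpq with
    | refl => exact ⟨hpr, hpB⟩
    | @tail p' _ _ hmove ih =>
      obtain ⟨hr, hB⟩ := ih
      obtain ⟨u, v, huv, hu, rfl⟩ := hmove
      have hur : u ≠ r := by rintro rfl; omega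
      have hvr : v ≠ r := by
        rintro rfl
        obtain ⟨i, hi⟩ := hw_root u huv
        have : (2 : ℝ) * w i u ≤ p' u * w i u :=
          mul_le_mul_of_nonneg_right (by exact_mod_cast hu) (hw_nonneg i u)
        linarith [hB i, mul_le_confWeight (hw_nonneg i) p' u]
      refine ⟨by simp [hur.symm, hvr.symm, hr], fun i => ?_⟩
      rw [confWeight_move _ huv.ne hu]
      linarith [hB i, hw_adj i u v huv hur hvr]
  rintro ⟨q, hpq, hq⟩
  have := (invariant q hpq).1
  omega

end Pebbling

/-- On `cycleGraph n` with root `0`, the non-root vertices form the path `1 — 2 — ⋯ — (n - 1)`,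
and `pathWeight a` doubles with each step away from `a` along it. -/
def pathWeight {n : ℕ} (a : ℕ) (v : Fin n) : ℝ := 2 ^ Nat.dist v a

theorem pathWeight_le_two_mul {n : ℕ} [NeZero n] (a : ℕ) {u v : Fin n}
    (huv : (cycleGraph n).Adj u v) (hu : u ≠ 0) (hv : v ≠ 0) :
    pathWeight a v ≤ 2 * pathWeight a u := by
  have hu0 := Fin.pos_iff_ne_zero.mpr hu
  have hv0 := Fin.pos_iff_ne_zero.mpr hv
  have hdist : Nat.dist v a ≤ Nat.dist u a + 1 := by
    have := cycleGraph_val_of_adj huv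
    unfold Nat.dist
    omega
  calc pathWeight a v ≤ 2 ^ (Nat.dist u a + 1) := pow_le_pow_right₀ one_le_two hdist
    _ = 2 * pathWeight a u := by rw [pathWeight, pow_succ, mul_comm]

theorem three_mul_div_three_lt_two_pow (m : ℕ) : 3 * (2 ^ m / 3) < 2 ^ m := by
  have : ¬ 3 ∣ 2 ^ m := fun h => by
    have := Nat.Prime.dvd_of_dvd_pow Nat.prime_three h
    omega
  omega

theorem stmt6 (k : ℕ) (hk : 1 ≤ k) :
    ∃ r : Fin (2 * k + 1),
      (∑ v, (if (cycleGraph (2 * k + 1)).dist r v = k then 2 ^ (k + 1) / 3 else 0)) =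
        2 * (2 ^ (k + 1) / 3) ∧
      ¬ Solvable (cycleGraph (2 * k + 1)) r
        (fun v => if (cycleGraph (2 * k + 1)).dist r v = k then 2 ^ (k + 1) / 3 else 0) := by
  set c := 2 ^ (k + 1) / 3
  have hc : (3 * c : ℝ) < 2 * 2 ^ k := by
    rw [← pow_succ']
    exact_mod_cast three_mul_div_three_lt_two_pow (k + 1)
  refine ⟨0, ?_, ?_⟩ <;> simp_rw [cycleGraph_dist_zero_eq_iff hk]
  · rw [Finset.sum_ite_mem, Finset.univ_inter, Finset.sum_pair (by simp [Fin.ext_iff])]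
    ring
  refine not_solvable_of_confWeight_le (fun i : Fin 2 => pathWeight (k + i)) (3 * c)
    (fun _ _ => pow_nonneg zero_le_two _) (fun _ _ _ => pathWeight_le_two_mul _)
    (fun u hu => ?_) (by simp [Fin.ext_iff, Nat.pos_iff_ne_zero.mp hk, eq_comm]) (fun i => ?_)
  · rcases cycleGraph_val_of_adj_zero hu with h | h
    · have hd : Nat.dist u (k + 1) = k := by unfold Nat.dist; omega
      exact ⟨1, by simpa [pathWeight, hd] using hc⟩
    · have hd : Nat.dist u k = k := by unfold Nat.dist; omega
      exact ⟨0, by simpa [pathWeight, hd] using hc⟩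
  · rw [confWeight_ite_mem]
    fin_cases i <;> norm_num [pathWeight, Nat.dist, mul_comm]
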